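/- If $G_1$ is an $n$-vertex counterexample to Conjecture 2 at vertex $v$ (i.e., $\mu(G_1)<\mu((G_1-v)\cup K_1)$) and $d_{G_1}(v)\ge 1$, then $G_1$ is also a counterexample to Conjecture 3: for the graph $G_3$ obtained from $G_1$ by deleting all but one of the edges incident to $v$, one has $\mu(G_1)<\mu(G_3)$. -/

import Mathlib

open SimpleGraph Finset

/-- `chromP G l` is the number of proper colorings of `G` with colors `{0, …, l-1}`,
i.e. the chromatic polynomial of `G` evaluated at `l`. -/
noncomputable def chromP {V : Type*} (G : SimpleGraph V) (l : ℕ) : ℕ :=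
  Nat.card {c : V → Fin l // ∀ u v, G.Adj u v → c u ≠ c v}

/-- The mean color number `μ(G) = n (1 - P(G,n-1)/P(G,n))` of a finite graph `G`
on `n` vertices. -/
noncomputable def meanColor {V : Type*} [Fintype V] (G : SimpleGraph V) : ℚ :=
  (Fintype.card V : ℚ) *
    (1 - (chromP G (Fintype.card V - 1) : ℚ) / (chromP G (Fintype.card V) : ℚ))

/-- `τ(G, H, n) = P(G,n) P(H,n-1) - P(G,n-1) P(H,n)`. -/
noncomputable def tau {V W : Type*} (G : SimpleGraph V) (H : SimpleGraph W) (n : ℕ) : ℤ :=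
  (chromP G n : ℤ) * (chromP H (n - 1) : ℤ) - (chromP G (n - 1) : ℤ) * (chromP H n : ℤ)

/-- `α(G,k)`: the number of partitions of the vertex set of `G` into exactly `k`
nonempty independent sets. -/
noncomputable def alphaPart {V : Type*} [Fintype V] (G : SimpleGraph V) (k : ℕ) : ℕ :=
  Nat.card {P : Finset (Finset V) //
    P.card = k ∧ (∀ B ∈ P, B.Nonempty) ∧
    (∀ v : V, ∃! B : Finset V, B ∈ P ∧ v ∈ B) ∧
    (∀ B ∈ P, ∀ u ∈ B, ∀ w ∈ B, ¬ G.Adj u w)}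

/-- `G ∪ K₁`: the graph `G` with one new isolated vertex (`none`) added. -/
noncomputable def addIsolated {V : Type*} (G : SimpleGraph V) : SimpleGraph (Option V) :=
  G.map Function.Embedding.some

/-- The graph `G` with one new vertex (`none`) joined to the single vertex `a` of `G`. -/
noncomputable def pendant {V : Type*} (G : SimpleGraph V) (a : V) : SimpleGraph (Option V) :=
  G.map Function.Embedding.some ⊔
    SimpleGraph.fromRel (fun x y => x = none ∧ y = some a)

/-- The chromatic count is positive whenever there are at least as many colors as
vertices (an injective coloring is proper). -/
lemma chromP_pos {V : Type*} [Fintype V] (G : SimpleGraph V) (l : ℕ)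
    (h : Fintype.card V ≤ l) : 0 < chromP G l := by
  have : Nonempty {c : V → Fin l // ∀ u v, G.Adj u v → c u ≠ c v} := by
    refine ⟨⟨fun x => Fin.castLE h (Fintype.equivFin V x), fun u w hadj hc => ?_⟩⟩
    exact hadj.ne ((Fintype.equivFin V).injective (Fin.castLE_injective h hc))
  have : Finite {c : V → Fin l // ∀ u v, G.Adj u v → c u ≠ c v} := Subtype.finite
  exact Nat.card_pos

/-- `P(G ∪ K₁, l) = l · P(G, l)`. -/
lemma chromP_addIsolated {V : Type*} (G : SimpleGraph V) (l : ℕ) :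
    chromP (addIsolated G) l = l * chromP G l := by
  have e : {c : Option V → Fin l // ∀ u w, (addIsolated G).Adj u w → c u ≠ c w} ≃
      Fin l × {c : V → Fin l // ∀ u w, G.Adj u w → c u ≠ c w} :=
    { toFun := fun c => ⟨c.1 none, fun x => c.1 (some x), fun u w h =>
        c.2 (some u) (some w) ⟨fun e => h.ne (Option.some.inj e), u, w, h, rfl, rfl⟩⟩
      invFun := fun p => ⟨fun o => o.elim p.1 p.2.1, by
        rintro u w ⟨-, x, y, hxy, rfl, rfl⟩
        exact p.2.2 x y hxy⟩
      left_inv := fun c => by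
        ext o
        cases o <;> rfl
      right_inv := fun p => rfl }
  rw [chromP, chromP, Nat.card_congr e, Nat.card_prod, Nat.card_eq_fintype_card,
    Fintype.card_fin]

/-- `P(G₃, m+1) = m · P(G - v, m+1)` where `G₃` keeps only the edge `va` at `v`. -/
lemma chromP_pendantDel {V : Type*} [Fintype V] [DecidableEq V]
    (G : SimpleGraph V) (v a : V) (ha : G.Adj v a) (m : ℕ) :
    chromP (G.deleteEdges {e | v ∈ e ∧ e ≠ s(v, a)}) (m + 1)
      = m * chromP (G.induce {x | x ≠ v}) (m + 1) := by
  classical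
  have hav : a ≠ v := ha.ne'
  set G₃ := G.deleteEdges {e | v ∈ e ∧ e ≠ s(v, a)} with hG₃
  have hadj3 : ∀ u w, G₃.Adj u w ↔ G.Adj u w ∧ ¬(v ∈ s(u, w) ∧ s(u, w) ≠ s(v, a)) := by
    intro u w
    rw [hG₃, SimpleGraph.deleteEdges_adj]
    rfl
  have e : {c : V → Fin (m+1) // ∀ u w, G₃.Adj u w → c u ≠ c w} ≃
      Σ d : {d : ↥{x : V | x ≠ v} → Fin (m+1) //
          ∀ u w, (G.induce {x : V | x ≠ v}).Adj u w → d u ≠ d w},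
        {k : Fin (m+1) // k ≠ d.1 ⟨a, hav⟩} :=
    { toFun := fun c => ⟨⟨fun x => c.1 x.1, by
        rintro ⟨x, hx⟩ ⟨y, hy⟩ hxy
        refine c.2 x y ((hadj3 x y).2 ⟨hxy, ?_⟩)
        rintro ⟨hv, -⟩
        rw [Sym2.mem_iff] at hv
        rcases hv with rfl | rfl
        · exact hx rfl
        · exact hy rfl⟩,
        ⟨c.1 v, c.2 v a ((hadj3 v a).2 ⟨ha, by rintro ⟨-, hne⟩; exact hne rfl⟩)⟩⟩
      invFun := fun p => ⟨fun x => if h : x = v then p.2.1 else p.1.1 ⟨x, h⟩, by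
        intro u w huw
        rw [hadj3] at huw
        obtain ⟨huw, hnot⟩ := huw
        push_neg at hnot
        by_cases hu : u = v
        · subst hu
          have hwa : w = a := Sym2.congr_right.1 (hnot (Sym2.mem_mk_left _ _))
          subst hwa
          simp only [dif_pos rfl, dif_neg hav]
          exact p.2.2
        · by_cases hw : w = v
          · subst hw
            have hs := hnot (Sym2.mem_mk_right _ _)
            rw [Sym2.eq_swap] at hs
            have hua : u = a := Sym2.congr_right.1 hs
            subst hua
            simp only [dif_neg hav, dif_pos rfl]
            exact fun hc => p.2.2 hc.symm
          · simp only [dif_neg hu, dif_neg hw]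
            exact p.1.2 ⟨u, hu⟩ ⟨w, hw⟩ (by simpa using huw)⟩
      left_inv := fun c => by
        ext x
        by_cases h : x = v <;> simp [h]
      right_inv := fun p => by
        obtain ⟨⟨d, hd⟩, ⟨k, hk⟩⟩ := p
        have hfst : (fun (x : ↥{x : V | x ≠ v}) =>
            (fun y => if h : y = v then k else d ⟨y, h⟩) x.1) = d := by
          funext x
          exact dif_neg x.2
        refine Sigma.ext (Subtype.ext hfst) ?_
        rw [Subtype.heq_iff_coe_eq]
        · exact dif_pos rfl
        · intro x
          have hA : (if h : a = v then k else d ⟨a, h⟩) = d ⟨a, hav⟩ := dif_neg hav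
          show x ≠ (if h : a = v then k else d ⟨a, h⟩) ↔ x ≠ d ⟨a, hav⟩
          rw [hA] }
  have hfib : ∀ d : {d : ↥{x : V | x ≠ v} → Fin (m+1) //
      ∀ u w, (G.induce {x : V | x ≠ v}).Adj u w → d u ≠ d w},
      Fintype.card {k : Fin (m+1) // k ≠ d.1 ⟨a, hav⟩} = m := by
    intro d
    rw [Fintype.card_subtype_compl, Fintype.card_fin, Fintype.card_subtype_eq]
    omega
  rw [chromP, chromP, Nat.card_congr e, Nat.card_eq_fintype_card, Fintype.card_sigma,
    Finset.sum_congr rfl (fun d _ => hfib d), Finset.sum_const, Finset.card_univ,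
    smul_eq_mul, Nat.card_eq_fintype_card, Nat.mul_comm]

/-- **Theorem 2.3.** If `G₁` is an `n`-vertex counterexample to
Conjecture 2 at a vertex `v` of degree `≥ 1` (witnessed by a neighbor `a`), i.e.
`μ(G₁) < μ((G₁ - v) ∪ K₁)`, then for `G₃` obtained from `G₁` by deleting all edges
at `v` except `va`, one has `μ(G₁) < μ(G₃)`. -/
theorem counterexample_conj2_to_conj3 {V : Type*} [Fintype V] [DecidableEq V]
    (G₁ : SimpleGraph V) (v a : V) (ha : G₁.Adj v a)
    (h : meanColor G₁ < meanColor (addIsolated (G₁.induce {x | x ≠ v}))) :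
    meanColor G₁ < meanColor (G₁.deleteEdges {e | v ∈ e ∧ e ≠ s(v, a)}) := by
  classical
  refine lt_of_lt_of_le h ?_
  have hn2 : 2 ≤ Fintype.card V := Fintype.one_lt_card_iff_nontrivial.2 ⟨⟨v, a, ha.ne⟩⟩
  obtain ⟨m, hm⟩ : ∃ m, Fintype.card V = m + 2 := ⟨Fintype.card V - 2, by omega⟩
  have h1 : Fintype.card ↥{x : V | x ≠ v} = m + 1 := by
    have hc : Fintype.card ↥{x : V | x ≠ v} = Fintype.card {x : V // ¬ x = v} :=
      Fintype.card_congr (Equiv.subtypeEquivRight fun x => Iff.rfl)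
    rw [hc, Fintype.card_subtype_compl, Fintype.card_subtype_eq, hm]
    omega
  have hcardO : Fintype.card (Option ↥{x : V | x ≠ v}) = m + 2 := by
    rw [Fintype.card_option, h1]
  have hq1 : 0 < chromP (G₁.induce {x : V | x ≠ v}) (m + 2) :=
    chromP_pos _ _ (by omega)
  have hq0 : 0 < chromP (G₁.induce {x : V | x ≠ v}) (m + 1) :=
    chromP_pos _ _ (by omega)
  have hA : chromP (G₁.deleteEdges {e | v ∈ e ∧ e ≠ s(v, a)}) (m + 2)
      = (m + 1) * chromP (G₁.induce {x : V | x ≠ v}) (m + 2) :=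
    chromP_pendantDel G₁ v a ha (m + 1)
  have hB : chromP (G₁.deleteEdges {e | v ∈ e ∧ e ≠ s(v, a)}) (m + 1)
      = m * chromP (G₁.induce {x : V | x ≠ v}) (m + 1) :=
    chromP_pendantDel G₁ v a ha m
  rw [meanColor, meanColor, hcardO, hm]
  have e1 : m + 2 - 1 = m + 1 := rfl
  rw [e1, hA, hB, chromP_addIsolated, chromP_addIsolated]
  set q1 : ℚ := (chromP (G₁.induce {x : V | x ≠ v}) (m + 2) : ℚ) with hq1'
  set q0 : ℚ := (chromP (G₁.induce {x : V | x ≠ v}) (m + 1) : ℚ) with hq0'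
  have hq1Q : 0 < q1 := by rw [hq1']; exact_mod_cast hq1
  have hq0Q : 0 < q0 := by rw [hq0']; exact_mod_cast hq0
  push_cast
  have key : (m : ℚ) * q0 / ((m + 1) * q1) ≤ (m + 1) * q0 / ((m + 2) * q1) := by
    rw [div_le_div_iff₀ (by positivity) (by positivity)]
    nlinarith [mul_pos hq0Q hq1Q]
  have hmono : 1 - ((m : ℚ) + 1) * q0 / (((m : ℚ) + 2) * q1)
      ≤ 1 - (m : ℚ) * q0 / (((m : ℚ) + 1) * q1) := by linarith
  nlinarith [hmono]
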